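/- arXiv:1409.1471 — 4 statements merged into one kernel-verified Lean document; each statement's English description precedes it below -/
import Mathlib

section
/- For every pair of positive integers m, r there exists a positive integer n₀ such that: for every block sequence 𝐬 = (s₀,...,s_{n-1}) of nonempty finite subsets of ℕ with n ≥ n₀ (i.e., max sᵢ < min s_{i+1} for all i), and every coloring of NU(𝐬) = {⋃_{i∈t} sᵢ : t a nonempty subset of {0,...,n-1}} with r colors, there exists a block subsequence 𝐭 = (t₀,...,t_{m-1}) of 𝐬 (i.e., each tⱼ ∈ NU(𝐬) and max tⱼ < min t_{j+1}) such that NU(𝐭) is monochromatic. -/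
/-- A word of length `n` over alphabet `[k]` together with one variable symbol `v`
(encoded as `none`). -/
abbrev VWord (k n : ℕ) := Fin n → Option (Fin k)

/-- `x` is a variable word: the variable occurs at least once. -/
def IsVarWord {k n : ℕ} (x : VWord k n) : Prop := ∃ i, x i = none

/-- A word of length `n` over alphabet `[k]` together with `m` variables `v₀,…,v_{m-1}`. -/
abbrev MWord (k m n : ℕ) := Fin n → Fin k ⊕ Fin m

/-- `w` is an `m`-dimensional variable word: each variable occurs at least once and
the variables are in block position. -/
def IsMVarWord {k m n : ℕ} (w : MWord k m n) : Prop :=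
  (∀ j : Fin m, ∃ i, w i = Sum.inr j) ∧
  ∀ i i' : Fin n, ∀ j j' : Fin m, i < i' → w i = Sum.inr j → w i' = Sum.inr j' → j ≤ j'

/-- Substitution of a sequence of symbols (letters or the variable `v`) into an
`m`-dimensional variable word. -/
def subst {k m n : ℕ} (w : MWord k m n) (x : Fin m → Option (Fin k)) : VWord k n :=
  fun i => Sum.elim some x (w i)

/-- Substitution of a sequence of symbols (letters or variables `v₀,…,v_{m'-1}`) into an
`m`-dimensional variable word. -/
def msubst {k m m' n : ℕ} (w : MWord k m n) (u : Fin m → Fin k ⊕ Fin m') : MWord k m' n :=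
  fun i => Sum.elim Sum.inl u (w i)

/-- `(a,b)`-equivalence of words over `[k] ∪ {v}`: for every symbol `e ∉ {a,b}`
(including the variable), `x` and `y` carry `e` at the same positions. -/
def ABEquiv {k n : ℕ} (a b : Fin k) (x y : Fin n → Option (Fin k)) : Prop :=
  ∀ e : Option (Fin k), e ≠ some a → e ≠ some b → ∀ i, (x i = e ↔ y i = e)

/-- A coloring `c` is `(a,b)`-insensitive over `w`. -/
def Insensitive {k m n r : ℕ} (c : VWord k n → Fin r) (a b : Fin k) (w : MWord k m n) : Prop :=
  ∀ x y : VWord k m, IsVarWord x → IsVarWord y → ABEquiv a b x y →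
    c (subst w x) = c (subst w y)

/-- A block sequence of nonempty finite subsets of ℕ. -/
def IsBlockSeq {n : ℕ} (s : Fin n → Finset ℕ) : Prop :=
  (∀ i, (s i).Nonempty) ∧ ∀ i j : Fin n, i < j → ∀ a ∈ s i, ∀ b ∈ s j, a < b

/-- The set of nonempty unions of a sequence of finite sets. -/
def NU {n : ℕ} (s : Fin n → Finset ℕ) : Set (Finset ℕ) :=
  {u | ∃ t : Finset (Fin n), t.Nonempty ∧ u = t.biUnion s}

/-- The Hindman property for `n₀`. -/
def HProp (m r n₀ : ℕ) : Prop :=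
  ∀ n, n₀ ≤ n → ∀ s : Fin n → Finset ℕ, IsBlockSeq s → ∀ c : Finset ℕ → Fin r,
    ∃ t : Fin m → Finset ℕ, IsBlockSeq t ∧ (∀ j, t j ∈ NU s) ∧
      ∃ col, ∀ u ∈ NU t, c u = col

/-- The finite Hindman number `H(m,r)`. -/
noncomputable def Hnum (m r : ℕ) : ℕ := sInf {n₀ | 0 < n₀ ∧ HProp m r n₀}

/-- The Graham–Rothschild base-case property for `n₀`. -/
def GRProp (k m r n₀ : ℕ) : Prop :=
  ∀ n, n₀ ≤ n → ∀ c : VWord k n → Fin r,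
    ∃ w : MWord k m n, IsMVarWord w ∧
      ∃ col, ∀ x : VWord k m, IsVarWord x → c (subst w x) = col

/-- The Graham–Rothschild base-case number `GR(k,m,r)`. -/
noncomputable def GRnum (k m r : ℕ) : ℕ := sInf {n₀ | 0 < n₀ ∧ GRProp k m r n₀}

/-- The insensitivity property for `n₀`. -/
def ShProp (k m r n₀ : ℕ) : Prop :=
  ∀ n, n₀ ≤ n → ∀ a b : Fin (k+1), a ≠ b → ∀ c : VWord (k+1) n → Fin r,
    ∃ w : MWord (k+1) m n, IsMVarWord w ∧ Insensitive c a b w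

/-- The insensitivity number `Sh_v(k,m,r)`. -/
noncomputable def Shv (k m r : ℕ) : ℕ := sInf {n₀ | 0 < n₀ ∧ ShProp k m r n₀}

/-- The recursively defined bounding function `f(k,j,m,r)`. -/
def fGR : ℕ → ℕ → ℕ → ℕ → ℕ
  | _, 0, _, _ => 0
  | k, j+1, m, r =>
    if k = 0 ∨ m = 0 ∨ r = 0 then 0
    else fGR k j m r + r ^ ((k+2) ^ (m - j - 1 + fGR k j m r))

/-- The bound for `GR(k,m,r)` obtained by iterating `fGR` starting from `H(m,r)`. -/
noncomputable def GRbound (m r : ℕ) : ℕ → ℕ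
  | 0 => Hnum m r
  | j+1 => fGR (j+1) (GRbound m r j) (GRbound m r j) r

/-- Insert the word `(a,…,a,b,…,b)` (with `t` copies of `a` and `d - t` copies of `b`)
into `z` at position `p`. -/
def insertAt {k q : ℕ} (d : ℕ) (a b : Fin (k+1)) (p t : ℕ)
    (z : Fin q → Option (Fin (k+1))) : Fin (q + d) → Option (Fin (k+1)) :=
  fun i =>
    if h : (i : ℕ) < p ∧ (i : ℕ) < q then z ⟨i, h.2⟩
    else if (i : ℕ) < p + t then some a
    else if (i : ℕ) < p + d then some b
    else if h2 : (i : ℕ) - d < q then z ⟨(i : ℕ) - d, h2⟩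
    else none


open Hindman

namespace HindmanAux

/-- The finset of binary digits of `n`. -/
def bitset (n : ℕ) : Finset ℕ := (Finset.range n).filter (fun i => n.testBit i)

lemma mem_bitset {n i : ℕ} : i ∈ bitset n ↔ n.testBit i = true := by
  constructor
  · intro h; exact (Finset.mem_filter.mp h).2
  · intro h
    refine Finset.mem_filter.mpr ⟨Finset.mem_range.mpr ?_, h⟩
    exact lt_of_lt_of_le (Nat.lt_two_pow_self (n := i)) (Nat.ge_two_pow_of_testBit h)

lemma bitset_nonempty {n : ℕ} (hn : 0 < n) : (bitset n).Nonempty := by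
  by_contra h
  rw [Finset.not_nonempty_iff_eq_empty] at h
  have : n = 0 := by
    apply Nat.eq_of_testBit_eq
    intro i
    rw [Nat.zero_testBit]
    by_contra hb
    simp only [Bool.not_eq_false] at hb
    have := mem_bitset.mpr hb
    simp [h] at this
  omega

lemma testBit_add_of_dvd {x y M : ℕ} (hx : x < 2 ^ M) (hy : 2 ^ M ∣ y) (i : ℕ) :
    (x + y).testBit i = ((x.testBit i) || (y.testBit i)) := by
  obtain ⟨z, rfl⟩ := hy
  rw [Nat.add_comm, Nat.testBit_two_pow_mul_add z hx i]
  rcases Nat.lt_or_ge i M with h | h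
  · simp only [h, if_true]
    rw [Nat.testBit_two_pow_mul]
    simp [Nat.not_le_of_lt h]
  · simp only [Nat.not_lt_of_le h, if_false]
    rw [Nat.testBit_two_pow_mul]
    have hxb : x.testBit i = false :=
      Nat.testBit_lt_two_pow (lt_of_lt_of_le hx (Nat.pow_le_pow_right (by norm_num) h))
    simp [h, hxb]

lemma exists_interval (b : Stream' ℕ) (start K : ℕ) :
    ∃ pq : ℕ × ℕ, start ≤ pq.1 ∧ pq.1 < pq.2 ∧
      2 ^ K ∣ ∑ i ∈ Finset.Ico pq.1 pq.2, b.get i := by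
  have key : ∀ t1 t2 : ℕ, t1 < t2 →
      (∑ i ∈ Finset.Ico start (start + t1), b.get i) % 2 ^ K =
      (∑ i ∈ Finset.Ico start (start + t2), b.get i) % 2 ^ K →
      ∃ pq : ℕ × ℕ, start ≤ pq.1 ∧ pq.1 < pq.2 ∧
        2 ^ K ∣ ∑ i ∈ Finset.Ico pq.1 pq.2, b.get i := by
    intro t1 t2 hlt heq
    refine ⟨(start + t1, start + t2), Nat.le_add_right _ _, by omega, ?_⟩
    have hsplit : (∑ i ∈ Finset.Ico start (start + t1), b.get i) +
        (∑ i ∈ Finset.Ico (start + t1) (start + t2), b.get i) =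
        ∑ i ∈ Finset.Ico start (start + t2), b.get i :=
      Finset.sum_Ico_consecutive _ (by omega) (by omega)
    have hmod : (∑ i ∈ Finset.Ico start (start + t1), b.get i) + 0 ≡
        (∑ i ∈ Finset.Ico start (start + t1), b.get i) +
          (∑ i ∈ Finset.Ico (start + t1) (start + t2), b.get i) [MOD 2 ^ K] := by
      rw [Nat.add_zero, hsplit]
      exact heq
    have := (Nat.ModEq.add_left_cancel' _ hmod).symm
    exact (Nat.modEq_zero_iff_dvd).mp this
  have hmaps : ∀ t ∈ Finset.range (2 ^ K + 1),
      (∑ i ∈ Finset.Ico start (start + t), b.get i) % 2 ^ K ∈ Finset.range (2 ^ K) := by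
    intro t _
    exact Finset.mem_range.mpr (Nat.mod_lt _ (Nat.two_pow_pos K))
  obtain ⟨t1, -, t2, -, hne, heq⟩ :=
    Finset.exists_ne_map_eq_of_card_lt_of_maps_to (by simp) hmaps
  rcases hne.lt_or_gt with h | h
  · exact key t1 t2 h heq
  · exact key t2 t1 h heq.symm

/-- Choose the next interval. -/
noncomputable def nxt (b : Stream' ℕ) (s : ℕ × ℕ) : ℕ × ℕ :=
  Classical.choose (exists_interval b s.1 s.2)

lemma nxt_spec (b : Stream' ℕ) (s : ℕ × ℕ) :
    s.1 ≤ (nxt b s).1 ∧ (nxt b s).1 < (nxt b s).2 ∧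
      2 ^ s.2 ∣ ∑ i ∈ Finset.Ico (nxt b s).1 (nxt b s).2, b.get i :=
  Classical.choose_spec (exists_interval b s.1 s.2)

/-- The state: (start index, power bound). -/
noncomputable def st (b : Stream' ℕ) : ℕ → ℕ × ℕ
  | 0 => (0, 1)
  | j + 1 =>
    ((nxt b (st b j)).2,
      (st b j).2 + ∑ i ∈ Finset.Ico (nxt b (st b j)).1 (nxt b (st b j)).2, b.get i)

/-- The interval of indices at step `j`. -/
noncomputable def iv (b : Stream' ℕ) (j : ℕ) : Finset ℕ :=
  Finset.Ico (nxt b (st b j)).1 (nxt b (st b j)).2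

/-- The `j`-th extracted number. -/
noncomputable def nj (b : Stream' ℕ) (j : ℕ) : ℕ := ∑ i ∈ iv b j, b.get i

lemma iv_nonempty (b : Stream' ℕ) (j : ℕ) : (iv b j).Nonempty := by
  rw [iv, Finset.nonempty_Ico]
  exact (nxt_spec b (st b j)).2.1

lemma nj_pos {b : Stream' ℕ} (hb : ∀ i, 0 < b.get i) (j : ℕ) : 0 < nj b j :=
  Finset.sum_pos (fun i _ => hb i) (iv_nonempty b j)

lemma nj_dvd (b : Stream' ℕ) (j : ℕ) : 2 ^ (st b j).2 ∣ nj b j :=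
  (nxt_spec b (st b j)).2.2

lemma st_succ_snd (b : Stream' ℕ) (j : ℕ) : (st b (j + 1)).2 = (st b j).2 + nj b j := rfl

lemma st_snd_mono (b : Stream' ℕ) : Monotone (fun j => (st b j).2) :=
  monotone_nat_of_le_succ (fun j => by rw [st_succ_snd]; omega)

lemma st_fst_mono (b : Stream' ℕ) : Monotone (fun j => (st b j).1) := by
  apply monotone_nat_of_le_succ
  intro j
  have h := nxt_spec b (st b j)
  show (st b j).1 ≤ (nxt b (st b j)).2
  omega

lemma iv_ordered (b : Stream' ℕ) {j j' : ℕ} (h : j < j') :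
    ∀ x ∈ iv b j, ∀ y ∈ iv b j', x < y := by
  intro x hx y hy
  rw [iv, Finset.mem_Ico] at hx hy
  have h1 : (nxt b (st b j)).2 = (st b (j + 1)).1 := rfl
  have h2 : (st b (j + 1)).1 ≤ (st b j').1 := st_fst_mono b h
  have h3 : (st b j').1 ≤ (nxt b (st b j')).1 := (nxt_spec b (st b j')).1
  omega

lemma nj_lt_pow (b : Stream' ℕ) (j : ℕ) : nj b j < 2 ^ (st b (j + 1)).2 := by
  rw [st_succ_snd]
  calc nj b j < 2 ^ nj b j := Nat.lt_two_pow_self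
    _ ≤ 2 ^ ((st b j).2 + nj b j) := Nat.pow_le_pow_right (by norm_num) (by omega)

lemma bit_lt {b : Stream' ℕ} {j i : ℕ} (h : (nj b j).testBit i = true) : i < nj b j :=
  lt_of_lt_of_le (Nat.lt_two_pow_self (n := i)) (Nat.ge_two_pow_of_testBit h)

lemma bit_ge {b : Stream' ℕ} {j i : ℕ} (h : (nj b j).testBit i = true) : (st b j).2 ≤ i := by
  by_contra hc
  push_neg at hc
  obtain ⟨z, hz⟩ := nj_dvd b j
  rw [hz, Nat.testBit_two_pow_mul] at h
  simp only [Bool.and_eq_true, decide_eq_true_eq] at h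
  omega

lemma dvd_sum_nj (b : Stream' ℕ) {J : Finset ℕ} {K : ℕ} (hJ : ∀ j ∈ J, K ≤ (st b j).2) :
    2 ^ K ∣ ∑ j ∈ J, nj b j := by
  apply Finset.dvd_sum
  intro j hj
  exact dvd_trans (pow_dvd_pow 2 (hJ j hj)) (nj_dvd b j)

lemma sum_bits (b : Stream' ℕ) (J : Finset ℕ) :
    ∀ i, (∑ j ∈ J, nj b j).testBit i = true ↔ ∃ j ∈ J, (nj b j).testBit i = true := by
  induction J using Finset.strongInductionOn with
  | _ J ih =>
    rcases J.eq_empty_or_nonempty with rfl | hJ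
    · simp
    · intro i
      set j0 := J.min' hJ with hj0def
      have hj0 : j0 ∈ J := J.min'_mem hJ
      have hsum : ∑ j ∈ J, nj b j = nj b j0 + ∑ j ∈ J.erase j0, nj b j :=
        (Finset.add_sum_erase _ _ hj0).symm
      have hdvd : 2 ^ (st b (j0 + 1)).2 ∣ ∑ j ∈ J.erase j0, nj b j := by
        apply dvd_sum_nj
        intro j hj
        have : j0 < j := Finset.min'_lt_of_mem_erase_min' _ hJ hj
        exact st_snd_mono b this
      rw [hsum, testBit_add_of_dvd (nj_lt_pow b j0) hdvd i, Bool.or_eq_true,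
        ih _ (Finset.erase_ssubset hj0) i]
      constructor
      · rintro (h | ⟨j, hj, h⟩)
        · exact ⟨j0, hj0, h⟩
        · exact ⟨j, Finset.mem_of_mem_erase hj, h⟩
      · rintro ⟨j, hj, h⟩
        by_cases hjj : j = j0
        · exact Or.inl (hjj ▸ h)
        · exact Or.inr ⟨j, Finset.mem_erase.mpr ⟨hjj, hj⟩, h⟩

lemma sum_nj_mem_FS (b : Stream' ℕ) {J : Finset ℕ} (hJ : J.Nonempty) :
    (∑ j ∈ J, nj b j) ∈ FS b := by
  have hdisj : (↑J : Set ℕ).PairwiseDisjoint (iv b) := by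
    intro j hj j' hj' hne
    rcases hne.lt_or_gt with h | h
    · exact Finset.disjoint_left.mpr (fun x hx hx' => absurd (iv_ordered b h x hx x hx') (lt_irrefl x))
    · exact Finset.disjoint_left.mpr (fun x hx hx' => absurd (iv_ordered b h x hx' x hx) (lt_irrefl x))
  have : ∑ j ∈ J, nj b j = ∑ i ∈ J.biUnion (iv b), b.get i := (Finset.sum_biUnion hdisj).symm
  rw [this]
  apply FS.finset_sum
  obtain ⟨j, hj⟩ := hJ
  obtain ⟨x, hx⟩ := iv_nonempty b j
  exact ⟨x, Finset.mem_biUnion.mpr ⟨j, hj, hx⟩⟩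

lemma FS_pos : ∀ {a : Stream' ℕ} {x : ℕ}, x ∈ FS a → (∀ i, 0 < a.get i) → 0 < x := by
  intro a x hx
  induction hx with
  | head' a => intro h; exact h 0
  | tail' a m _ ih => intro h; exact ih (fun i => h (i + 1))
  | cons' a m _ _ =>
    intro h
    have h0 : a.head = a.get 0 := rfl
    have := h 0
    rw [h0]
    omega

end HindmanAux

open Hindman HindmanAux in
theorem infiniteUnions (m r : ℕ) (hr : 0 < r) (c : Finset ℕ → Fin r) :
    ∃ t : Fin m → Finset ℕ, IsBlockSeq t ∧ ∃ col, ∀ u ∈ NU t, c u = col := by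
  classical
  set a : Stream' ℕ := fun i => 2 ^ i with ha_def
  have hapos : ∀ i, 0 < a.get i := fun i => Nat.two_pow_pos i
  set cells : Set (Set ℕ) := Set.range (fun v : Fin r => {x | x ∈ FS a ∧ c (bitset x) = v})
    with hcells
  have hcov : FS a ⊆ ⋃₀ cells := by
    intro x hx
    exact ⟨_, ⟨c (bitset x), rfl⟩, hx, rfl⟩
  obtain ⟨cl, hclmem, b, hb⟩ := FS_partition_regular a cells (Set.finite_range _) hcov
  obtain ⟨v, rfl⟩ := hclmem
  have hbpos : ∀ i, 0 < b.get i := fun i => FS_pos (hb (FS.singleton b i)).1 hapos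
  refine ⟨fun j => bitset (nj b (j : ℕ)), ⟨?_, ?_⟩, v, ?_⟩
  · intro j
    exact bitset_nonempty (nj_pos hbpos _)
  · intro j j' hjj' x hx y hy
    rw [mem_bitset] at hx hy
    have h1 : x < nj b (j : ℕ) := bit_lt hx
    have h2 : (st b (j' : ℕ)).2 ≤ y := bit_ge hy
    have h3 : (st b ((j : ℕ) + 1)).2 ≤ (st b (j' : ℕ)).2 := st_snd_mono b hjj'
    have h4 : (st b ((j : ℕ) + 1)).2 = (st b (j : ℕ)).2 + nj b (j : ℕ) := st_succ_snd b _
    omega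
  · rintro u ⟨T, hT, rfl⟩
    set J : Finset ℕ := T.image (Fin.val) with hJdef
    have hJne : J.Nonempty := hT.image _
    have hu : T.biUnion (fun j => bitset (nj b (j : ℕ))) = bitset (∑ j ∈ J, nj b j) := by
      ext i
      rw [Finset.mem_biUnion, mem_bitset, sum_bits b J i]
      constructor
      · rintro ⟨j, hj, hij⟩
        exact ⟨(j : ℕ), Finset.mem_image_of_mem _ hj, mem_bitset.mp hij⟩
      · rintro ⟨j, hj, hij⟩
        obtain ⟨j', hj', rfl⟩ := Finset.mem_image.mp hj
        exact ⟨j', hj', mem_bitset.mpr hij⟩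
    rw [hu]
    have hsumFS : (∑ j ∈ J, nj b j) ∈ FS b := sum_nj_mem_FS b hJne
    exact (hb hsumFS).2

theorem finitize (m r : ℕ) (hr : 0 < r) :
    ∃ n₀ : ℕ, ∀ c : Finset ℕ → Fin r, ∃ t : Fin m → Finset ℕ, IsBlockSeq t ∧
      (∀ j, t j ⊆ Finset.range n₀) ∧ ∃ col, ∀ u ∈ NU t, c u = col := by
  classical
  by_contra h
  push_neg at h
  choose cn hcn using h
  set U := Filter.hyperfilter ℕ with hU
  have hex : ∀ u : Finset ℕ, ∃ v : Fin r, {n | cn n u = v} ∈ U := by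
    intro u
    by_contra hv
    push_neg at hv
    have hcompl : ∀ v : Fin r, {n | cn n u = v}ᶜ ∈ U := fun v =>
      Ultrafilter.compl_mem_iff_notMem.mpr (hv v)
    have hint : (⋂ v ∈ (Finset.univ : Finset (Fin r)), {n | cn n u = v}ᶜ) ∈ U :=
      (Filter.biInter_finset_mem _).mpr (fun v _ => hcompl v)
    obtain ⟨n, hn⟩ := Ultrafilter.nonempty_of_mem hint
    have := Set.mem_iInter₂.mp hn (cn n u) (Finset.mem_univ _)
    exact this rfl
  choose C hC using hex
  obtain ⟨t, htb, col, hmono⟩ := infiniteUnions m r hr C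
  set N : ℕ := (Finset.univ.sup (fun j : Fin m => (t j).sup id)) + 1 with hN
  have htN : ∀ j, t j ⊆ Finset.range N := by
    intro j x hx
    rw [Finset.mem_range]
    have : x ≤ (t j).sup id := Finset.le_sup (f := id) hx
    have h2 : (t j).sup id ≤ Finset.univ.sup (fun j : Fin m => (t j).sup id) :=
      Finset.le_sup (f := fun j : Fin m => (t j).sup id) (Finset.mem_univ j)
    omega
  set NUfin : Finset (Finset ℕ) :=
    (Finset.univ : Finset (Finset (Fin m))).image (fun T => T.biUnion t) with hNUfin
  have hA1 : (⋂ u ∈ NUfin, {n | cn n u = C u}) ∈ U :=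
    (Filter.biInter_finset_mem _).mpr (fun u _ => hC u)
  have hA2 : {n | N ≤ n} ∈ U := by
    apply Filter.mem_hyperfilter_of_finite_compl
    have : {n : ℕ | N ≤ n}ᶜ = {n | n < N} := by ext n; simp
    rw [this]
    exact Set.finite_lt_nat N
  obtain ⟨n, hn⟩ := Ultrafilter.nonempty_of_mem (Filter.inter_mem hA1 hA2)
  obtain ⟨hn1, hn2⟩ := hn
  obtain ⟨u, hu, hne⟩ := hcn n t htb
    (fun j => (htN j).trans (Finset.range_subset_range.mpr hn2)) col
  apply hne
  obtain ⟨T, hT, rfl⟩ := hu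
  have humem : T.biUnion t ∈ NUfin :=
    Finset.mem_image_of_mem _ (Finset.mem_univ T)
  have := Set.mem_iInter₂.mp hn1 _ humem
  rw [this]
  exact hmono _ ⟨T, hT, rfl⟩


/-- Finite Hindman theorem. -/
theorem stmt_0 (m r : ℕ) (hm : 0 < m) (hr : 0 < r) :
    ∃ n₀ : ℕ, 0 < n₀ ∧ ∀ n, n₀ ≤ n → ∀ s : Fin n → Finset ℕ, IsBlockSeq s →
      ∀ c : Finset ℕ → Fin r,
        ∃ t : Fin m → Finset ℕ, IsBlockSeq t ∧ (∀ j, t j ∈ NU s) ∧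
          ∃ col, ∀ u ∈ NU t, c u = col := by
  classical
  obtain ⟨n₁, hG⟩ := finitize m r hr
  refine ⟨n₁ + 1, Nat.succ_pos _, ?_⟩
  intro n hn s hs c
  set cc : Finset ℕ → Fin r :=
    fun u => c ((Finset.univ.filter (fun i : Fin n => (i : ℕ) ∈ u)).biUnion s) with hcc
  obtain ⟨t, htb, htr, col, hmono⟩ := hG cc
  set I : Fin m → Finset (Fin n) := fun j => Finset.univ.filter (fun i => (i : ℕ) ∈ t j) with hI
  have hmemI : ∀ (j : Fin m) (i : Fin n), i ∈ I j ↔ (i : ℕ) ∈ t j := by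
    intro j i; simp [hI]
  have hIne : ∀ j, (I j).Nonempty := by
    intro j
    obtain ⟨x, hx⟩ := htb.1 j
    have hxlt : x < n := lt_of_lt_of_le (Finset.mem_range.mp (htr j hx)) (by omega)
    exact ⟨⟨x, hxlt⟩, (hmemI j ⟨x, hxlt⟩).mpr hx⟩
  set T : Fin m → Finset ℕ := fun j => (I j).biUnion s with hT
  have key : ∀ J : Finset (Fin m),
      (Finset.univ.filter (fun i : Fin n => (i : ℕ) ∈ J.biUnion t)) = J.biUnion I := by
    intro J
    ext i
    simp [hI, Finset.mem_biUnion]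
  refine ⟨T, ⟨?_, ?_⟩, ?_, col, ?_⟩
  · intro j
    obtain ⟨i, hi⟩ := hIne j
    obtain ⟨x, hx⟩ := hs.1 i
    exact ⟨x, Finset.mem_biUnion.mpr ⟨i, hi, hx⟩⟩
  · intro j j' hjj' x hx y hy
    obtain ⟨i, hi, hxi⟩ := Finset.mem_biUnion.mp hx
    obtain ⟨i', hi', hyi⟩ := Finset.mem_biUnion.mp hy
    have h1 : (i : ℕ) ∈ t j := (hmemI _ _).mp hi
    have h2 : (i' : ℕ) ∈ t j' := (hmemI _ _).mp hi'
    have hlt : (i : ℕ) < (i' : ℕ) := htb.2 j j' hjj' _ h1 _ h2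
    exact hs.2 i i' (by exact_mod_cast hlt) x hxi y hyi
  · intro j
    exact ⟨I j, hIne j, rfl⟩
  · rintro u ⟨J, hJ, rfl⟩
    have heq : c (J.biUnion T) = cc (J.biUnion t) := by
      show c _ = c _
      congr 1
      rw [key J, Finset.biUnion_biUnion]
    rw [heq]
    exact hmono _ ⟨J, hJ, rfl⟩
end

section
/- For every triple of positive integers k, m, r there exists a positive integer n₀ such that: for every n ≥ n₀, every pair of distinct letters a, b ∈ [k+1], and every coloring c of the set of variable words over k+1 of length n with r colors, there exists an m-dimensional variable word w(v₀,...,v_{m-1}) over k+1 of length n such that c is (a,b)-insensitive over w, i.e., for every pair 𝐱, 𝐲 of (a,b)-equivalent variable words over k+1 of length m, c(w(𝐱)) = c(w(𝐲)). -/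
/-- Strong insensitivity: without the variable-word restrictions. -/
def StrongIns {k m n r : ℕ} (c : VWord k n → Fin r) (a b : Fin k) (w : MWord k m n) : Prop :=
  ∀ x y : Fin m → Option (Fin k), ABEquiv a b x y → c (subst w x) = c (subst w y)

/-- Concatenation of words. -/
def app {α : Type*} {p q : ℕ} (u : Fin p → α) (v : Fin q → α) : Fin (p + q) → α :=
  fun i => if h : (i : ℕ) < p then u ⟨i, h⟩ else v ⟨(i : ℕ) - p, by omega⟩

/-- The word `aᵗ b^{N-t}`. -/
def blk {k N : ℕ} (a b : Fin (k+1)) (t : ℕ) : Fin N → Option (Fin (k+1)) :=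
  fun i => if (i : ℕ) < t then some a else some b

/-- The word `aᵗ s^{t'-t} b^{N-t'}`. -/
def blockOf {k N : ℕ} (a b : Fin (k+1)) (t t' : ℕ) (s : Option (Fin (k+1))) :
    Fin N → Option (Fin (k+1)) :=
  fun i => if (i : ℕ) < t then some a else if (i : ℕ) < t' then s else some b

lemma blockOf_a {k N : ℕ} (a b : Fin (k+1)) (t t' : ℕ) (h : t ≤ t') :
    blockOf (N := N) a b t t' (some a) = blk a b t' := by
  funext i
  simp only [blockOf, blk]
  split_ifs <;> first | rfl | omega

lemma blockOf_b {k N : ℕ} (a b : Fin (k+1)) (t t' : ℕ) :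
    blockOf (N := N) a b t t' (some b) = blk a b t := by
  funext i
  simp only [blockOf, blk]
  split_ifs <;> first | rfl | omega

/-- The extended `(m+1)`-dimensional variable word. -/
def bigW {k m n' N : ℕ} (a b : Fin (k+1)) (t t' : ℕ) (w' : MWord (k+1) m n') :
    MWord (k+1) (m+1) (n' + N) :=
  app (fun i => Sum.map id Fin.castSucc (w' i))
    (fun i : Fin N =>
      if (i : ℕ) < t then Sum.inl a
      else if (i : ℕ) < t' then Sum.inr (Fin.last m) else Sum.inl b)

lemma subst_bigW {k m n' N : ℕ} (a b : Fin (k+1)) (t t' : ℕ) (w' : MWord (k+1) m n')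
    (x : Fin (m+1) → Option (Fin (k+1))) :
    subst (bigW (N := N) a b t t' w') x =
      app (subst w' (x ∘ Fin.castSucc)) (blockOf a b t t' (x (Fin.last m))) := by
  funext i
  simp only [subst, bigW, app, blockOf]
  by_cases h : (i : ℕ) < n'
  · simp only [dif_pos h]
    cases w' ⟨i, h⟩ <;> rfl
  · simp only [dif_neg h]
    split_ifs <;> rfl

lemma isMVar_bigW {k m n' N : ℕ} (a b : Fin (k+1)) (t t' : ℕ) (ht : t < t') (ht' : t' ≤ N)
    (w' : MWord (k+1) m n') (hw' : IsMVarWord w') :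
    IsMVarWord (bigW (N := N) a b t t' w') := by
  have hmem : ∀ (i : Fin (n' + N)) (j : Fin (m+1)), bigW (N := N) a b t t' w' i = Sum.inr j →
      (∃ (h : (i : ℕ) < n') (j₀ : Fin m), j = Fin.castSucc j₀ ∧ w' ⟨i, h⟩ = Sum.inr j₀) ∨
      (n' ≤ (i : ℕ) ∧ j = Fin.last m) := by
    intro i j hij
    simp only [bigW, app] at hij
    by_cases h : (i : ℕ) < n'
    · left
      rw [dif_pos h] at hij
      refine ⟨h, ?_⟩
      cases hw : w' ⟨i, h⟩ with
      | inl l => rw [hw, Sum.map_inl] at hij; simp at hij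
      | inr j₀ =>
        rw [hw, Sum.map_inr] at hij
        exact ⟨j₀, (Sum.inr_injective hij).symm, rfl⟩
    · right
      rw [dif_neg h] at hij
      refine ⟨by omega, ?_⟩
      split_ifs at hij with h1 h2
      all_goals first
        | exact (Sum.inr_injective hij).symm
        | exact absurd hij (by simp)
  constructor
  · intro j
    refine Fin.lastCases ?_ ?_ j
    · refine ⟨⟨n' + t, by omega⟩, ?_⟩
      simp only [bigW, app]
      rw [dif_neg (by omega)]
      have h1 : ¬ (n' + t - n' < t) := by omega
      have h2 : n' + t - n' < t' := by omega
      simp only [h1, h2, if_false, if_true]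
    · intro j₀
      obtain ⟨i, hi⟩ := hw'.1 j₀
      refine ⟨⟨(i : ℕ), by omega⟩, ?_⟩
      simp only [bigW, app]
      rw [dif_pos i.isLt]
      have : (⟨(i : ℕ), i.isLt⟩ : Fin n') = i := rfl
      rw [this, hi]
      rfl
  · intro i i' j j' hlt hi hi'
    rcases hmem i j hi with ⟨h, j₀, rfl, hw⟩ | ⟨h, rfl⟩
    · rcases hmem i' j' hi' with ⟨h', j₀', rfl, hw'eq⟩ | ⟨h', rfl⟩
      · have : j₀ ≤ j₀' := hw'.2 ⟨i, h⟩ ⟨i', h'⟩ j₀ j₀' hlt hw hw'eq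
        exact Fin.castSucc_le_castSucc_iff.mpr this
      · exact Fin.le_last _
    · rcases hmem i' j' hi' with ⟨h', j₀', rfl, hw'eq⟩ | ⟨h', rfl⟩
      · exact absurd hlt (by simp only [Fin.lt_def]; omega)
      · exact le_refl _

lemma main_aux (k : ℕ) (m : ℕ) : ∀ r : ℕ, 0 < r →
    ∃ n₀ : ℕ, 0 < n₀ ∧ ∀ n, n₀ ≤ n → ∀ a b : Fin (k+1), a ≠ b →
      ∀ c : VWord (k+1) n → Fin r,
        ∃ w : MWord (k+1) m n, IsMVarWord w ∧ StrongIns c a b w := by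
  induction m with
  | zero =>
    intro r hr
    refine ⟨1, one_pos, fun n _ a b _ c =>
      ⟨fun _ => Sum.inl 0, ⟨fun j => j.elim0, fun i i' j j' _ _ _ => j.elim0⟩,
        fun x y _ => by rw [Subsingleton.elim x y]⟩⟩
  | succ m ih =>
    intro r hr
    haveI : Nonempty (Fin r) := ⟨⟨0, hr⟩⟩
    obtain ⟨n₀', hn₀'pos, Hih⟩ :=
      ih (Fintype.card (Option (Fin (k+1)) → Fin r)) Fintype.card_pos
    set eenc := Fintype.equivFin (Option (Fin (k+1)) → Fin r) with heenc
    refine ⟨n₀' + Fintype.card (VWord (k+1) n₀' → Fin r) + 1, by positivity, ?_⟩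
    intro n hn a b hab c
    obtain ⟨N, rfl⟩ : ∃ N, n = n₀' + N := ⟨n - n₀', by omega⟩
    have hN : Fintype.card (VWord (k+1) n₀' → Fin r) < N := by omega
    -- pigeonhole
    have key : ∃ t t' : ℕ, t < t' ∧ t' ≤ N ∧
        ∀ z : VWord (k+1) n₀',
          c (app z (blk a b t)) = c (app z (blk a b t')) := by
      obtain ⟨u, u', huu', hFeq⟩ :=
        Fintype.exists_ne_map_eq_of_card_lt
          (fun u : Fin (N+1) => fun z : VWord (k+1) n₀' => c (app z (blk a b (u : ℕ))))
          (by simpa using Nat.lt_succ_of_lt hN)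
      rcases huu'.lt_or_gt with h | h
      · exact ⟨u, u', h, by omega, fun z => congrFun hFeq z⟩
      · exact ⟨u', u, h, by omega, fun z => (congrFun hFeq z).symm⟩
    obtain ⟨t, t', htt', ht'N, hswap⟩ := key
    -- the product coloring
    set C : VWord (k+1) n₀' → Fin (Fintype.card (Option (Fin (k+1)) → Fin r)) :=
      fun z => eenc (fun s => c (app z (blockOf a b t t' s))) with hC
    obtain ⟨w', hw', hins⟩ := Hih n₀' le_rfl a b hab C
    refine ⟨bigW (N := N) a b t t' w', isMVar_bigW a b t t' htt' ht'N w' hw', ?_⟩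
    intro x y hxy
    have hxy' : ABEquiv a b (x ∘ Fin.castSucc) (y ∘ Fin.castSucc) :=
      fun e h1 h2 i => hxy e h1 h2 (Fin.castSucc i)
    have hCeq := hins (x ∘ Fin.castSucc) (y ∘ Fin.castSucc) hxy'
    simp only [subst, hC] at hCeq
    have hfun := eenc.injective hCeq
    have step1 : c (app (subst w' (x ∘ Fin.castSucc)) (blockOf a b t t' (x (Fin.last m)))) =
        c (app (subst w' (y ∘ Fin.castSucc)) (blockOf a b t t' (x (Fin.last m)))) :=
      congrFun hfun (x (Fin.last m))
    have step2 : c (app (subst w' (y ∘ Fin.castSucc)) (blockOf a b t t' (x (Fin.last m)))) =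
        c (app (subst w' (y ∘ Fin.castSucc)) (blockOf a b t t' (y (Fin.last m)))) := by
      rcases eq_or_ne (x (Fin.last m)) (y (Fin.last m)) with heq | hne
      · rw [heq]
      · have hxab : x (Fin.last m) = some a ∨ x (Fin.last m) = some b := by
          by_contra hcon
          push_neg at hcon
          exact hne ((hxy _ hcon.1 hcon.2 (Fin.last m)).mp rfl).symm
        have hyab : y (Fin.last m) = some a ∨ y (Fin.last m) = some b := by
          by_contra hcon
          push_neg at hcon
          exact hne ((hxy _ hcon.1 hcon.2 (Fin.last m)).mpr rfl)
        rcases hxab with hx | hx <;> rcases hyab with hy | hy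
        · rw [hx, hy]
        · rw [hx, hy, blockOf_a a b t t' htt'.le, blockOf_b]
          exact (hswap _).symm
        · rw [hx, hy, blockOf_a a b t t' htt'.le, blockOf_b]
          exact hswap _
        · rw [hx, hy]
    calc c (subst (bigW (N := N) a b t t' w') x)
        = c (app (subst w' (x ∘ Fin.castSucc)) (blockOf a b t t' (x (Fin.last m)))) := by
          rw [subst_bigW]
      _ = c (app (subst w' (y ∘ Fin.castSucc)) (blockOf a b t t' (y (Fin.last m)))) := by
          rw [step1, step2]
      _ = c (subst (bigW (N := N) a b t t' w') y) := by rw [subst_bigW]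

/-- The variable-word analogue of Shelah's insensitivity lemma. -/
theorem stmt_7 (k m r : ℕ) (hk : 0 < k) (hm : 0 < m) (hr : 0 < r) :
    ∃ n₀ : ℕ, 0 < n₀ ∧ ∀ n, n₀ ≤ n → ∀ a b : Fin (k+1), a ≠ b →
      ∀ c : VWord (k+1) n → Fin r,
        ∃ w : MWord (k+1) m n, IsMVarWord w ∧ Insensitive c a b w := by
  obtain ⟨n₀, hpos, H⟩ := main_aux k m r hr
  refine ⟨n₀, hpos, fun n hn a b hab c => ?_⟩
  obtain ⟨w, hw, hs⟩ := H n hn a b hab c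
  exact ⟨w, hw, fun x y _ _ hxy => hs x y hxy⟩
end

section
/- With f(k,0,m,r) = 0 and f(k,j+1,m,r) = f(k,j,m,r) + r^{(k+2)^{m-j-1+f(k,j,m,r)}}, the least n₀ in the variable-word insensitivity lemma satisfies Sh_v(k,m,r) ≤ f(k,m,m,r) for all positive integers k, m, r. -/
section ShvProof

/-- Pointwise `(a,b)`-compatibility of symbols. -/
def ABc {k : ℕ} (a b : Fin (k+1)) (u v : Option (Fin (k+1))) : Prop :=
  u = v ∨ (u = some a ∧ v = some b) ∨ (u = some b ∧ v = some a)

lemma abEquiv_abc {k n : ℕ} {a b : Fin (k+1)} {x y : Fin n → Option (Fin (k+1))}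
    (h : ABEquiv a b x y) (i : Fin n) : ABc a b (x i) (y i) := by
  by_cases hxa : x i = some a
  · by_cases hya : y i = some a
    · exact Or.inl (hxa.trans hya.symm)
    · by_cases hyb : y i = some b
      · exact Or.inr (Or.inl ⟨hxa, hyb⟩)
      · exact Or.inl ((h (y i) hya hyb i).2 rfl)
  · by_cases hxb : x i = some b
    · by_cases hyb : y i = some b
      · exact Or.inl (hxb.trans hyb.symm)
      · by_cases hya : y i = some a
        · exact Or.inr (Or.inr ⟨hxb, hya⟩)
        · exact Or.inl ((h (y i) hya hyb i).2 rfl)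
    · exact Or.inl ((h (x i) hxa hxb i).1 rfl).symm

lemma subst_msubst {k m m' n : ℕ} (w : MWord k m n) (u : Fin m → Fin k ⊕ Fin m')
    (x : Fin m' → Option (Fin k)) : subst (msubst w u) x = subst w (subst u x) := by
  funext i; simp only [subst, msubst]; cases w i <;> rfl

lemma isMVarWord_msubst {k m m' n : ℕ} {w : MWord k m n} {u : Fin m → Fin k ⊕ Fin m'}
    (hw : IsMVarWord w) (hu : IsMVarWord (u : MWord k m' m)) : IsMVarWord (msubst w u) := by
  obtain ⟨hw1, hw2⟩ := hw; obtain ⟨hu1, hu2⟩ := hu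
  constructor
  · intro j; obtain ⟨i', hi'⟩ := hu1 j; obtain ⟨i, hi⟩ := hw1 i'
    exact ⟨i, by simp [msubst, hi, hi']⟩
  · intro i i' j j' hlt hi hi'
    simp only [msubst] at hi hi'
    cases hwi : w i with
    | inl v => rw [hwi] at hi; simp at hi
    | inr q =>
      cases hwi' : w i' with
      | inl v => rw [hwi'] at hi'; simp at hi'
      | inr q' =>
        rw [hwi] at hi; rw [hwi'] at hi'
        simp only [Sum.elim_inr] at hi hi'
        have hqq : q ≤ q' := hw2 i i' q q' hlt hwi hwi'
        rcases eq_or_lt_of_le hqq with rfl | hqq'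
        · rw [hi] at hi'; exact le_of_eq (Sum.inr.inj hi')
        · exact hu2 q q' j j' hqq' hi hi'

/-- Delete the symbol at position `p`. -/
def delw {k : ℕ} (p s : ℕ) (z : Fin (p + 1 + s) → Option (Fin (k+1))) :
    Fin (p + s) → Option (Fin (k+1)) := fun i =>
  if h : (i : ℕ) < p then z ⟨i, by have := i.isLt; omega⟩
  else z ⟨(i : ℕ) + 1, by have := i.isLt; omega⟩

/-- Insert the block `a^t b^(L-t)` at position `p`. -/
def expandw {k : ℕ} (a b : Fin (k+1)) (p L s t : ℕ) (z : Fin (p + s) → Option (Fin (k+1))) :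
    Fin (p + L + s) → Option (Fin (k+1)) := fun i =>
  if h : (i : ℕ) < p then z ⟨i, by have := i.isLt; omega⟩
  else if (i : ℕ) < p + t then some a
  else if h3 : (i : ℕ) < p + L then some b
  else z ⟨(i : ℕ) - L, by have := i.isLt; omega⟩

/-- The template word for one step: the block `a^t v b^(L-t')` with the variable region
`[t,t')`, keeping all other coordinates as variables. -/
def Tw {k : ℕ} (a b : Fin (k+1)) (p L s t t' : ℕ) :
    Fin (p + L + s) → (Fin (k+1) ⊕ Fin (p + 1 + s)) := fun i =>
  if h : (i : ℕ) < p then Sum.inr ⟨i, by have := i.isLt; omega⟩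
  else if (i : ℕ) < p + t then Sum.inl a
  else if (i : ℕ) < p + t' then Sum.inr ⟨p, by omega⟩
  else if h4 : (i : ℕ) < p + L then Sum.inl b
  else Sum.inr ⟨(i : ℕ) - L + 1, by have := i.isLt; omega⟩

lemma Tw_mvar {k : ℕ} (a b : Fin (k+1)) (p L s t t' : ℕ) (h1 : t < t') (h2 : t' ≤ L) :
    IsMVarWord (Tw a b p L s t t' : MWord (k+1) (p+1+s) (p+L+s)) := by
  constructor
  · intro j
    rcases lt_trichotomy (j : ℕ) p with hj | hj | hj
    · refine ⟨⟨j, by omega⟩, ?_⟩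
      simp only [Tw]; rw [dif_pos hj]
    · refine ⟨⟨p + t, by omega⟩, ?_⟩
      simp only [Tw]; rw [dif_neg (by omega), if_neg (by omega), if_pos (by omega)]
      exact congrArg Sum.inr (Fin.ext hj.symm)
    · refine ⟨⟨(j : ℕ) - 1 + L, by have := j.isLt; omega⟩, ?_⟩
      simp only [Tw]
      rw [dif_neg (by omega), if_neg (by omega), if_neg (by omega), dif_neg (by omega)]
      exact congrArg Sum.inr (Fin.ext (by simp; omega))
  · intro i i' j j' hlt hTi hTi'
    rw [Fin.lt_def] at hlt
    rw [Fin.le_def]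
    simp only [Tw] at hTi hTi'
    split_ifs at hTi hTi' <;>
      simp only [Sum.inr.injEq, reduceCtorEq, Fin.ext_iff] at hTi hTi' <;> try omega

lemma subst_Tw_a {k : ℕ} {a b : Fin (k+1)} {p L s t t' : ℕ}
    (z : Fin (p + 1 + s) → Option (Fin (k+1))) (hz : z ⟨p, by omega⟩ = some a)
    (htt : t ≤ t') (htL : t' ≤ L) :
    subst (Tw a b p L s t t') z = expandw a b p L s t' (delw p s z) := by
  funext i
  simp only [subst, Tw, expandw, delw]
  split_ifs with h1 h2 h3 h4 h5 h6 h7 <;>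
    simp only [Sum.elim_inl, Sum.elim_inr] <;>
    first
      | rfl
      | omega
      | (exact hz)
      | (exact hz.symm)
      | (exact congrArg z (Fin.ext (by simp; omega)))

lemma subst_Tw_b {k : ℕ} {a b : Fin (k+1)} {p L s t t' : ℕ}
    (z : Fin (p + 1 + s) → Option (Fin (k+1))) (hz : z ⟨p, by omega⟩ = some b)
    (htt : t ≤ t') (htL : t' ≤ L) :
    subst (Tw a b p L s t t') z = expandw a b p L s t (delw p s z) := by
  funext i
  simp only [subst, Tw, expandw, delw]
  split_ifs with h1 h2 h3 h4 h5 h6 h7 <;>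
    simp only [Sum.elim_inl, Sum.elim_inr] <;>
    first
      | rfl
      | omega
      | (exact hz)
      | (exact hz.symm)
      | (exact congrArg z (Fin.ext (by simp; omega)))

end ShvProof
section StepLemma

lemma shv_step {k r n : ℕ} (a b : Fin (k+1)) (p s L M M' : ℕ)
    (hM : M = p + L + s) (hM' : M' = p + 1 + s) (hL : r ^ ((k+2)^(p+s)) ≤ L)
    (c : VWord (k+1) n → Fin r) (W : MWord (k+1) M n) (hW : IsMVarWord W)
    (hInv : ∀ z z' : Fin M → Option (Fin (k+1)),
      (∀ i : Fin M, (i:ℕ) < p + L → z i = z' i) → (∀ i, ABc a b (z i) (z' i)) →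
      c (subst W z) = c (subst W z')) :
    ∃ W' : MWord (k+1) M' n, IsMVarWord W' ∧
      ∀ z z' : Fin M' → Option (Fin (k+1)),
        (∀ i : Fin M', (i:ℕ) < p → z i = z' i) → (∀ i, ABc a b (z i) (z' i)) →
        c (subst W' z) = c (subst W' z') := by
  subst hM hM'
  have hcard : Fintype.card ((Fin (p+s) → Option (Fin (k+1))) → Fin r)
      < Fintype.card (Fin (L+1)) := by
    simp only [Fintype.card_fun, Fintype.card_option, Fintype.card_fin]
    rw [show k+1+1 = k+2 from rfl]
    omega
  obtain ⟨t1, t2, hne, heq⟩ := Fintype.exists_ne_map_eq_of_card_lt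
    (fun t : Fin (L+1) => fun z => c (subst W (expandw a b p L s (t:ℕ) z))) hcard
  have key : ∃ t t' : ℕ, t < t' ∧ t' ≤ L ∧
      ∀ z, c (subst W (expandw a b p L s t z)) = c (subst W (expandw a b p L s t' z)) := by
    rcases Nat.lt_or_ge (t1:ℕ) (t2:ℕ) with h | h
    · exact ⟨t1, t2, h, by have := t2.isLt; omega, fun z => congrFun heq z⟩
    · have h' : (t2:ℕ) < (t1:ℕ) := lt_of_le_of_ne h (fun hh => hne (Fin.ext hh.symm))
      exact ⟨t2, t1, h', by have := t1.isLt; omega, fun z => (congrFun heq z).symm⟩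
  obtain ⟨t, t', htt, htL, hg⟩ := key
  refine ⟨msubst W (Tw a b p L s t t'),
    isMVarWord_msubst hW (Tw_mvar a b p L s t t' htt htL), ?_⟩
  have hEE : ∀ z z' : Fin (p+1+s) → Option (Fin (k+1)),
      (∀ i : Fin (p+1+s), (i:ℕ) < p → z i = z' i) → (∀ i, ABc a b (z i) (z' i)) →
      c (subst W (expandw a b p L s t' (delw p s z)))
        = c (subst W (expandw a b p L s t' (delw p s z'))) := by
    intro z z' hpre habc
    apply hInv
    · intro i hi
      simp only [expandw, delw]
      split_ifs <;>
        first
          | rfl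
          | (exact hpre _ (by simp; omega))
          | (exact absurd hi (by omega))
          | omega
    · intro i
      simp only [expandw, delw]
      split_ifs <;>
        first
          | (exact Or.inl rfl)
          | (exact habc _)
          | omega
  intro z z' hpre habc
  rw [subst_msubst, subst_msubst]
  rcases habc ⟨p, by omega⟩ with hPP | ⟨ha, hb⟩ | ⟨hb, ha⟩
  · apply hInv
    · intro i hi
      simp only [subst, Tw]
      split_ifs with h1 h2 h3 h4 <;> simp only [Sum.elim_inl, Sum.elim_inr] <;>
        first
          | rfl
          | (exact hpre _ (by simp; omega))
          | (exact hPP)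
          | (exact absurd hi (by omega))
          | omega
    · intro i
      simp only [subst, Tw]
      split_ifs <;> simp only [Sum.elim_inl, Sum.elim_inr] <;>
        first
          | (exact Or.inl rfl)
          | (exact Or.inl hPP)
          | (exact habc _)
          | omega
  · rw [subst_Tw_a z ha htt.le htL, subst_Tw_b z' hb htt.le htL, hg (delw p s z')]
    exact hEE z z' hpre habc
  · rw [subst_Tw_b z hb htt.le htL, subst_Tw_a z' ha htt.le htL, hg (delw p s z)]
    exact hEE z z' hpre habc

end StepLemma
section MainInduction

lemma shv_main {k m r : ℕ} (hk : 0 < k) (hm : 0 < m) (hr : 0 < r) (n : ℕ)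
    (hn : fGR k m m r ≤ n) (a b : Fin (k+1)) (c : VWord (k+1) n → Fin r) :
    ∀ d, d ≤ m → ∃ (M : ℕ) (W : MWord (k+1) M n),
      M = fGR k (m-d) m r + d ∧ IsMVarWord W ∧
      (∀ z z' : Fin M → Option (Fin (k+1)),
        (∀ i : Fin M, (i:ℕ) < fGR k (m-d) m r → z i = z' i) →
        (∀ i, ABc a b (z i) (z' i)) → c (subst W z) = c (subst W z')) := by
  intro d
  induction d with
  | zero =>
    intro _
    refine ⟨fGR k m m r,
      fun i => if h : (i:ℕ) < fGR k m m r then Sum.inr ⟨i, h⟩ else Sum.inl 0,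
      by simp, ?_, ?_⟩
    · constructor
      · intro j
        refine ⟨⟨j, lt_of_lt_of_le j.isLt hn⟩, ?_⟩
        dsimp only
        rw [dif_pos j.isLt]
      · intro i i' j j' hlt hi hi'
        dsimp only at hi hi'
        split_ifs at hi hi' with h1 h2 <;>
          first
            | (simp only [Sum.inr.injEq, Fin.ext_iff] at hi hi'
               rw [Fin.le_def]
               rw [Fin.lt_def] at hlt
               omega)
            | simp at hi
            | simp at hi'
    · intro z z' hpre habc
      have : z = z' := funext fun i => hpre i (by simpa using i.isLt)
      rw [this]
  | succ d ih =>
    intro hd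
    obtain ⟨M, W, hM, hW, hInv⟩ := ih (by omega)
    set p := fGR k (m - (d+1)) m r with hp
    set L := r ^ ((k+2) ^ (d + p)) with hLdef
    have hmd : m - d = (m - (d+1)) + 1 := by omega
    have hfs : fGR k (m - d) m r = p + L := by
      rw [hmd]
      simp only [fGR]
      rw [if_neg (by push_neg; exact ⟨hk.ne', hm.ne', hr.ne'⟩)]
      rw [show m - (m - (d+1)) - 1 = d from by omega]
    have hL : r ^ ((k+2)^(p+d)) ≤ L := by rw [hLdef, Nat.add_comm d p]
    have hInv' : ∀ z z' : Fin M → Option (Fin (k+1)),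
        (∀ i : Fin M, (i:ℕ) < p + L → z i = z' i) → (∀ i, ABc a b (z i) (z' i)) →
        c (subst W z) = c (subst W z') := by
      rw [← hfs]; exact hInv
    obtain ⟨W', hW', hInv''⟩ := shv_step a b p d L M (fGR k (m-(d+1)) m r + (d+1))
      (by omega) (by omega) hL c W hW hInv'
    exact ⟨fGR k (m-(d+1)) m r + (d+1), W', rfl, hW', hInv''⟩

lemma shv_shprop {k m r : ℕ} (hk : 0 < k) (hm : 0 < m) (hr : 0 < r) :
    ShProp k m r (fGR k m m r) := by
  intro n hn a b _ c
  obtain ⟨M, W, hM, hW, hInv⟩ := shv_main hk hm hr n hn a b c m le_rfl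
  have hM' : M = m := by
    rw [Nat.sub_self] at hM
    simpa [fGR] using hM
  subst hM'
  refine ⟨W, hW, ?_⟩
  intro x y _ _ hxy
  apply hInv
  · intro i hi
    rw [Nat.sub_self] at hi
    simp only [fGR] at hi
    omega
  · exact fun i => abEquiv_abc hxy i

end MainInduction
/-- `Sh_v(k,m,r) ≤ f(k,m,m,r)`. -/
theorem stmt_8 (k m r : ℕ) (hk : 0 < k) (hm : 0 < m) (hr : 0 < r) :
    Shv k m r ≤ fGR k m m r := by
  apply Nat.sInf_le
  refine ⟨?_, shv_shprop hk hm hr⟩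
  obtain ⟨m', rfl⟩ := Nat.exists_eq_succ_of_ne_zero hm.ne'
  simp only [fGR]
  rw [if_neg (by push_neg; exact ⟨hk.ne', (Nat.succ_ne_zero m'), hr.ne'⟩)]
  exact Nat.add_pos_right _ (pow_pos hr _)
end

section
/- Graham–Rothschild base case: for every triple of positive integers k, r, m there exists a positive integer n₀ such that for every n ≥ n₀ and every r-coloring of the set of all variable words over k of length n, there exists an m-dimensional variable word w(v₀,...,v_{m-1}) over k of length n such that the set of all variable words over k reduced by w (i.e., {w(𝐱) : 𝐱 a variable word over k of length m}) is monochromatic. -/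
section UnionsHindman

open Filter

attribute [local instance] Ultrafilter.mul Ultrafilter.semigroup

instance grSemigroupFinset : Semigroup (Finset ℕ) where
  mul a b := a ∪ b
  mul_assoc a b c := Finset.union_assoc a b c

lemma gr_finset_mul_def (a b : Finset ℕ) : a * b = a ∪ b := rfl

def GRTail (t : ℕ) : Set (Finset ℕ) := {S | S.Nonempty ∧ ∀ x ∈ S, t ≤ x}

lemma grTail_anti {t t' : ℕ} (h : t ≤ t') : GRTail t' ⊆ GRTail t :=
  fun S hS => ⟨hS.1, fun x hx => le_trans h (hS.2 x hx)⟩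

lemma grTail_mul {t : ℕ} {A B : Finset ℕ} (hA : A ∈ GRTail t) (hB : B ∈ GRTail t) :
    A * B ∈ GRTail t := by
  refine ⟨hA.1.mono Finset.subset_union_left, ?_⟩
  intro x hx
  rw [gr_finset_mul_def, Finset.mem_union] at hx
  rcases hx with h | h
  exacts [hA.2 x h, hB.2 x h]

lemma gr_exists_good_idem :
    ∃ U : Ultrafilter (Finset ℕ), U * U = U ∧ ∀ t : ℕ, GRTail t ∈ U := by
  have h := exists_idempotent_in_compact_subsemigroup (M := Ultrafilter (Finset ℕ))
      Ultrafilter.continuous_mul_left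
      (⋂ t : ℕ, {U : Ultrafilter (Finset ℕ) | GRTail t ∈ U}) ?_ ?_ ?_
  · obtain ⟨U, hU, hidem⟩ := h
    exact ⟨U, hidem, fun t => Set.mem_iInter.mp hU t⟩
  · apply IsCompact.nonempty_iInter_of_sequence_nonempty_isCompact_isClosed
    · intro t U hU
      exact mem_of_superset hU (grTail_anti (Nat.le_succ t))
    · intro t
      refine ⟨pure {t}, ?_⟩
      simp only [Set.mem_setOf_eq, Ultrafilter.mem_pure]
      exact ⟨⟨t, Finset.mem_singleton_self t⟩,
        fun x hx => le_of_eq (Finset.mem_singleton.mp hx).symm⟩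
    · exact (ultrafilter_isClosed_basic _).isCompact
    · intro t; exact ultrafilter_isClosed_basic _
  · exact IsClosed.isCompact (isClosed_iInter fun t => ultrafilter_isClosed_basic _)
  · intro U hU V hV
    rw [Set.mem_iInter] at *
    intro t
    have : ∀ᶠ m in (U * V : Ultrafilter (Finset ℕ)), m ∈ GRTail t := by
      rw [Ultrafilter.eventually_mul]
      filter_upwards [hU t] with A hA
      filter_upwards [hV t] with B hB
      exact grTail_mul hA hB
    exact this

lemma gr_blocks (U : Ultrafilter (Finset ℕ)) (hidem : U * U = U) (htail : ∀ t, GRTail t ∈ U) :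
    ∀ (j : ℕ) (s : Set (Finset ℕ)), s ∈ U →
      ∃ B : Fin j → Finset ℕ,
        (∀ i i' : Fin j, i < i' → ∀ p ∈ B i, ∀ q ∈ B i', p < q) ∧
        (∀ T : Finset (Fin j), T.Nonempty → T.biUnion B ∈ s) := by
  intro j
  induction j with
  | zero =>
    intro s _
    exact ⟨fun i => ∅, fun i => i.elim0, fun T hT => hT.choose.elim0⟩
  | succ j IH =>
    intro s hs
    have hstar : {A | {A' | A * A' ∈ s} ∈ U} ∈ U := by
      have h2 : ∀ᶠ m in ((U * U : Ultrafilter (Finset ℕ)) : Filter (Finset ℕ)), m ∈ s := by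
        rw [hidem]; exact hs
      rw [Ultrafilter.eventually_mul] at h2
      exact h2
    obtain ⟨B₀, hB₀s, hB₀star, hB₀tail⟩ :
        ∃ B₀, B₀ ∈ s ∧ {A' | B₀ * A' ∈ s} ∈ U ∧ B₀ ∈ GRTail 0 := by
      obtain ⟨B₀, h1, h2, h3⟩ :=
        Ultrafilter.nonempty_of_mem (inter_mem hs (inter_mem hstar (htail 0)))
      exact ⟨B₀, h1, h2, h3⟩
    have hB₀ne : B₀.Nonempty := hB₀tail.1
    set t₀ := B₀.max' hB₀ne + 1 with ht₀
    have hs' : s ∩ ({A' | B₀ * A' ∈ s} ∩ GRTail t₀) ∈ U :=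
      inter_mem hs (inter_mem hB₀star (htail t₀))
    obtain ⟨B', hsep', hmem'⟩ := IH _ hs'
    have hB'mem : ∀ l : Fin j, B' l ∈ s ∩ ({A' | B₀ * A' ∈ s} ∩ GRTail t₀) := by
      intro l
      have := hmem' {l} ⟨l, Finset.mem_singleton_self l⟩
      rwa [Finset.singleton_biUnion] at this
    refine ⟨Fin.cases B₀ B', ?_, ?_⟩
    · intro i i' hlt p hp q hq
      rcases Fin.eq_zero_or_eq_succ i' with rfl | ⟨l', rfl⟩
      · exact absurd hlt (Fin.not_lt_zero i)
      · rcases Fin.eq_zero_or_eq_succ i with rfl | ⟨l, rfl⟩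
        · simp only [Fin.cases_zero] at hp
          simp only [Fin.cases_succ] at hq
          have hq' := (hB'mem l').2.2.2 q hq
          have hp' := B₀.le_max' p hp
          omega
        · simp only [Fin.cases_succ] at hp hq
          exact hsep' l l' (by rwa [Fin.succ_lt_succ_iff] at hlt) p hp q hq
    · intro T hT
      classical
      set T' : Finset (Fin j) := Finset.univ.filter (fun l => Fin.succ l ∈ T) with hT'
      have key : T.biUnion (Fin.cases B₀ B') =
          (if (0 : Fin (j+1)) ∈ T then B₀ else ∅) ∪ T'.biUnion B' := by
        ext x
        simp only [Finset.mem_biUnion, Finset.mem_union, hT', Finset.mem_filter,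
          Finset.mem_univ, true_and]
        constructor
        · rintro ⟨i, hiT, hx⟩
          rcases Fin.eq_zero_or_eq_succ i with rfl | ⟨l, rfl⟩
          · rw [Fin.cases_zero] at hx
            rw [if_pos hiT]
            exact Or.inl hx
          · rw [Fin.cases_succ] at hx
            exact Or.inr ⟨l, hiT, hx⟩
        · rintro (hx | ⟨l, hl, hx⟩)
          · split_ifs at hx with h0
            · exact ⟨0, h0, by rwa [Fin.cases_zero]⟩
            · exact absurd hx (Finset.notMem_empty x)
          · exact ⟨l.succ, hl, by rwa [Fin.cases_succ]⟩
      by_cases h0 : (0 : Fin (j+1)) ∈ T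
      · rcases T'.eq_empty_or_nonempty with hTe | hTne
        · rw [key, if_pos h0, hTe, Finset.biUnion_empty, Finset.union_empty]
          exact hB₀s
        · have h1 := hmem' T' hTne
          have h2 : B₀ * T'.biUnion B' ∈ s := h1.2.1
          rw [gr_finset_mul_def] at h2
          rw [key, if_pos h0]
          exact h2
      · have hTne : T'.Nonempty := by
          obtain ⟨i, hi⟩ := hT
          rcases Fin.eq_zero_or_eq_succ i with rfl | ⟨l, rfl⟩
          · exact absurd hi h0
          · exact ⟨l, by simp [hT', hi]⟩
        rw [key, if_neg h0, Finset.empty_union]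
        exact (hmem' T' hTne).1

lemma gr_infUnions {m r : ℕ} (c : Finset ℕ → Fin r) :
    ∃ B : Fin m → Finset ℕ, (∀ i, (B i).Nonempty) ∧
      (∀ i i' : Fin m, i < i' → ∀ p ∈ B i, ∀ q ∈ B i', p < q) ∧
      ∃ col, ∀ T : Finset (Fin m), T.Nonempty → c (T.biUnion B) = col := by
  obtain ⟨U, hidem, htail⟩ := gr_exists_good_idem
  have hex : ∃ col : Fin r, {A | c A = col} ∈ U := by
    by_contra h
    push_neg at h
    have h' : ∀ col : Fin r, {A | c A = col}ᶜ ∈ U := fun col =>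
      Ultrafilter.compl_mem_iff_notMem.mpr (h col)
    have h2 : (⋂ col : Fin r, {A | c A = col}ᶜ) ∈ U := Filter.iInter_mem.mpr h'
    obtain ⟨A, hA⟩ := Ultrafilter.nonempty_of_mem h2
    exact Set.mem_iInter.mp hA (c A) rfl
  obtain ⟨col, hcol⟩ := hex
  obtain ⟨B, hsep, hmem⟩ := gr_blocks U hidem htail m ({A | c A = col} ∩ GRTail 0)
    (inter_mem hcol (htail 0))
  refine ⟨B, ?_, hsep, col, ?_⟩
  · intro i
    have := hmem {i} ⟨i, Finset.mem_singleton_self i⟩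
    rw [Finset.singleton_biUnion] at this
    exact this.2.1
  · intro T hT
    exact (hmem T hT).1

def GRUnionGood (m r n : ℕ) (c : Finset ℕ → Fin r) : Prop :=
  ∃ B : Fin m → Finset ℕ, (∀ i, (B i).Nonempty) ∧
    (∀ i i' : Fin m, i < i' → ∀ p ∈ B i, ∀ q ∈ B i', p < q) ∧
    (∀ i, ∀ p ∈ B i, p < n) ∧
    ∃ col, ∀ T : Finset (Fin m), T.Nonempty → c (T.biUnion B) = col

lemma gr_ultra_pick {ι : Type} (V : Ultrafilter ι) {r : ℕ} (g : ι → Fin r) :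
    ∃ γ : Fin r, {t | g t = γ} ∈ V := by
  by_contra h
  push_neg at h
  have h' : ∀ γ : Fin r, {t | g t = γ}ᶜ ∈ V := fun γ =>
    Ultrafilter.compl_mem_iff_notMem.mpr (h γ)
  have h2 : (⋂ γ : Fin r, {t | g t = γ}ᶜ) ∈ V := Filter.iInter_mem.mpr h'
  obtain ⟨t, ht⟩ := Ultrafilter.nonempty_of_mem h2
  exact Set.mem_iInter.mp ht (g t) rfl

lemma gr_finiteUnions (m r : ℕ) :
    ∃ n₀ : ℕ, ∀ n, n₀ ≤ n → ∀ c : Finset ℕ → Fin r, GRUnionGood m r n c := by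
  by_contra h
  push_neg at h
  choose nf hnf cf hcf using h
  have hatne : (Filter.atTop : Filter ℕ).NeBot := Filter.atTop_neBot
  set V : Ultrafilter ℕ := Ultrafilter.of Filter.atTop with hV
  have hVle : (V : Filter ℕ) ≤ Filter.atTop := Ultrafilter.of_le _
  choose cstar hcstar using fun S : Finset ℕ => gr_ultra_pick V (fun t => cf t S)
  obtain ⟨B, hne, hsep, col, hcol⟩ := gr_infUnions (m := m) cstar
  set N : ℕ := (Finset.univ.biUnion B).sup id + 1 with hN
  have hbound : ∀ i, ∀ p ∈ B i, p < N := by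
    intro i p hp
    have hmem : p ∈ Finset.univ.biUnion B :=
      Finset.mem_biUnion.mpr ⟨i, Finset.mem_univ i, hp⟩
    have h2 := Finset.le_sup (f := id) hmem
    simp only [id_eq] at h2
    omega
  have hG : (⋂ T : Finset (Fin m), {t | cf t (T.biUnion B) = cstar (T.biUnion B)}) ∈ V :=
    Filter.iInter_mem.mpr fun T => hcstar (T.biUnion B)
  have hH : {t : ℕ | N ≤ nf t} ∈ V := by
    have h1 : {t : ℕ | N ≤ t} ∈ (Filter.atTop : Filter ℕ) := Filter.mem_atTop N
    exact mem_of_superset (hVle h1) (fun t ht => le_trans ht (hnf t))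
  obtain ⟨t, htG, htH⟩ := Ultrafilter.nonempty_of_mem (inter_mem hG hH)
  refine hcf t ⟨B, hne, hsep, fun i p hp => lt_of_lt_of_le (hbound i p hp) htH, col, ?_⟩
  intro T hT
  have := Set.mem_iInter.mp htG T
  rw [this]
  exact hcol T hT

end UnionsHindman

def GRGood (k m r n : ℕ) : Prop :=
  ∀ c : VWord k n → Fin r, ∃ w : MWord k m n, IsMVarWord w ∧
    ∃ col, ∀ x : VWord k m, IsVarWord x → c (subst w x) = col

lemma gr_one (m r : ℕ) : ∃ n₀ : ℕ, ∀ n, n₀ ≤ n → GRGood 1 m r n := by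
  classical
  obtain ⟨n₀, hFU⟩ := gr_finiteUnions m r
  refine ⟨n₀, fun n hn c => ?_⟩
  set c' : Finset ℕ → Fin r := fun S => c (fun i => if (i : ℕ) ∈ S then none else some 0) with hc'
  obtain ⟨B, hne, hsep, hbd, col, hcol⟩ := hFU n hn c'
  have hdisj : ∀ (j j' : Fin m) (p : ℕ), p ∈ B j → p ∈ B j' → j = j' := by
    intro j j' p hj hj'
    by_contra hne'
    rcases lt_or_gt_of_ne hne' with h | h
    · exact lt_irrefl p (hsep j j' h p hj p hj')
    · exact lt_irrefl p (hsep j' j h p hj' p hj)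
  set w : MWord 1 m n := fun i =>
    if h : ∃ j, (i : ℕ) ∈ B j then Sum.inr h.choose else Sum.inl 0 with hw
  have hwval : ∀ (i : Fin n) (j : Fin m), (i : ℕ) ∈ B j → w i = Sum.inr j := by
    intro i j hij
    have hex : ∃ j, (i : ℕ) ∈ B j := ⟨j, hij⟩
    rw [hw]
    simp only [dif_pos hex]
    exact congrArg Sum.inr (hdisj _ j _ hex.choose_spec hij)
  have hwinv : ∀ (i : Fin n) (j : Fin m), w i = Sum.inr j → (i : ℕ) ∈ B j := by
    intro i j h
    by_cases hex : ∃ j, (i : ℕ) ∈ B j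
    · rw [hw] at h
      simp only [dif_pos hex] at h
      have := Sum.inr.inj h
      rw [← this]
      exact hex.choose_spec
    · rw [hw] at h
      simp only [dif_neg hex] at h
      exact (Sum.inl_ne_inr h).elim
  refine ⟨w, ⟨?_, ?_⟩, col, ?_⟩
  · intro j
    obtain ⟨p, hp⟩ := hne j
    exact ⟨⟨p, hbd j p hp⟩, hwval _ j hp⟩
  · intro i i' j j' hlt hj hj'
    have h1 := hwinv i j hj
    have h2 := hwinv i' j' hj'
    by_contra hle
    have hjj : j' < j := lt_of_not_ge hle
    have := hsep j' j hjj _ h2 _ h1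
    have hii : (i : ℕ) < (i' : ℕ) := hlt
    omega
  · intro x hx
    set T : Finset (Fin m) := Finset.univ.filter (fun j => x j = none) with hT
    set S : Finset ℕ := T.biUnion B with hS
    have hsubst : subst w x = fun i : Fin n => if (i : ℕ) ∈ S then none else some 0 := by
      funext i
      by_cases hex : ∃ j, (i : ℕ) ∈ B j
      · obtain ⟨j, hj⟩ := hex
        have hwi := hwval i j hj
        show Sum.elim some x (w i) = _
        rw [hwi]
        cases hxj : x j with
        | none =>
          have hiS : (i : ℕ) ∈ S := Finset.mem_biUnion.mpr
            ⟨j, Finset.mem_filter.mpr ⟨Finset.mem_univ j, hxj⟩, hj⟩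
          simp [hiS, hxj]
        | some l =>
          have hiS : (i : ℕ) ∉ S := by
            intro hmem
            obtain ⟨j', hj'T, hj'⟩ := Finset.mem_biUnion.mp hmem
            have : j' = j := hdisj j' j _ hj' hj
            rw [this] at hj'T
            have := (Finset.mem_filter.mp hj'T).2
            rw [hxj] at this
            exact Option.some_ne_none l this
          simp only [Sum.elim_inr, if_neg hiS]
          rw [hxj]
          exact congrArg some (Subsingleton.elim l 0)
      · have hwi : w i = Sum.inl 0 := by rw [hw]; simp only [dif_neg hex]
        have hiS : (i : ℕ) ∉ S := by
          intro hmem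
          obtain ⟨j', _, hj'⟩ := Finset.mem_biUnion.mp hmem
          exact hex ⟨j', hj'⟩
        show Sum.elim some x (w i) = _
        rw [hwi]
        simp [hiS]
    have hTne : T.Nonempty := by
      obtain ⟨j, hj⟩ := hx
      exact ⟨j, Finset.mem_filter.mpr ⟨Finset.mem_univ j, hj⟩⟩
    have : c (subst w x) = c' S := by rw [hsubst]
    rw [this]
    exact hcol T hTne

def ABRel {K M : ℕ} (a b : Fin K) (x y : Fin M → Option (Fin K)) : Prop :=
  ∀ j, x j = y j ∨ ((x j = some a ∨ x j = some b) ∧ (y j = some a ∨ y j = some b))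

lemma gr_finSplit {d n' : ℕ} (i : Fin (d + n')) :
    (∃ i₀ : Fin d, i = Fin.castAdd n' i₀) ∨ (∃ i₀ : Fin n', i = Fin.natAdd d i₀) := by
  by_cases h : (i : ℕ) < d
  · exact Or.inl ⟨⟨i, h⟩, by ext; simp⟩
  · refine Or.inr ⟨⟨(i : ℕ) - d, by have := i.isLt; omega⟩, by ext; simp; omega⟩

lemma gr_shelah (K : ℕ) (a b : Fin K) (M : ℕ) :
    ∀ (κ : Type) [Fintype κ], ∃ n₁ : ℕ, ∀ n, n₁ ≤ n → ∀ c : VWord K n → κ,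
      ∃ w : MWord K M n, IsMVarWord w ∧
        ∀ x y : Fin M → Option (Fin K), ABRel a b x y → c (subst w x) = c (subst w y) := by
  induction M with
  | zero =>
    intro κ _
    refine ⟨0, fun n _ c => ⟨fun _ => Sum.inl a,
      ⟨fun j => j.elim0, fun _ _ j _ _ _ _ => j.elim0⟩, ?_⟩⟩
    intro x y _
    rfl
  | succ M IH =>
    intro κ _
    classical
    set d := Fintype.card ((Fin M → Option (Fin K)) → κ) with hd
    obtain ⟨n₁', hIH⟩ := IH ((Fin d → Option (Fin K)) → κ)
    refine ⟨d + n₁', fun n hn c => ?_⟩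
    obtain ⟨n', rfl⟩ : ∃ n', n = d + n' := ⟨n - d, by omega⟩
    have hn' : n₁' ≤ n' := by omega
    obtain ⟨wr, hwr, hins⟩ := hIH n' hn' (fun z f => c (Fin.append f z))
    set τ : ℕ → Fin d → Option (Fin K) := fun s i => if (i : ℕ) < s then some a else some b with hτ
    set tp : Fin (d+1) → ((Fin M → Option (Fin K)) → κ) :=
      fun s e => c (Fin.append (τ (s : ℕ)) (subst wr e)) with htp
    obtain ⟨s₁, s₂, hne, heq⟩ := Fintype.exists_ne_map_eq_of_card_lt tp
      (by rw [Fintype.card_fin, hd]; exact Nat.lt_succ_self _)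
    obtain ⟨t, t', htt, htp2⟩ : ∃ t t' : Fin (d+1), (t : ℕ) < (t' : ℕ) ∧ tp t = tp t' := by
      rcases lt_or_gt_of_ne hne with h | h
      · exact ⟨s₁, s₂, h, heq⟩
      · exact ⟨s₂, s₁, h, heq.symm⟩
    have ht'd : (t' : ℕ) ≤ d := Nat.lt_succ_iff.mp t'.isLt
    have htd : (t : ℕ) < d := lt_of_lt_of_le htt ht'd
    set g : Fin d → Fin K ⊕ Fin (M+1) := fun i =>
      if (i : ℕ) < (t : ℕ) then Sum.inl a
      else if (i : ℕ) < (t' : ℕ) then Sum.inr 0 else Sum.inl b with hg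
    set w : MWord K (M+1) (d + n') :=
      Fin.append g (fun i => Sum.map id Fin.succ (wr i)) with hw
    have hwL : ∀ i₀ : Fin d, w (Fin.castAdd n' i₀) = g i₀ := by
      intro i₀; rw [hw]; exact Fin.append_left g _ i₀
    have hwR : ∀ i₀ : Fin n', w (Fin.natAdd d i₀) = Sum.map id Fin.succ (wr i₀) := by
      intro i₀; rw [hw]; exact Fin.append_right g _ i₀
    have hgval : ∀ i₀ : Fin d, g i₀ = if (i₀ : ℕ) < (t : ℕ) then Sum.inl a
        else if (i₀ : ℕ) < (t' : ℕ) then Sum.inr 0 else Sum.inl b := fun _ => rfl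
    have hτval : ∀ (s : ℕ) (i : Fin d), τ s i = if (i : ℕ) < s then some a else some b :=
      fun _ _ => rfl
    have hginr : ∀ (i₀ : Fin d) (j : Fin (M+1)), g i₀ = Sum.inr j → j = 0 := by
      intro i₀ j h
      rw [hgval i₀] at h
      split_ifs at h
      exact (Sum.inr.inj h).symm
    have hrinr : ∀ (i₀ : Fin n') (j : Fin (M+1)),
        Sum.map id Fin.succ (wr i₀) = Sum.inr j → ∃ j₀, wr i₀ = Sum.inr j₀ ∧ j = j₀.succ := by
      intro i₀ j h
      cases hcase : wr i₀ with
      | inl l => rw [hcase] at h; exact absurd h (by simp)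
      | inr j₀ =>
        rw [hcase] at h
        simp only [Sum.map_inr] at h
        exact ⟨j₀, rfl, (Sum.inr.inj h).symm⟩
    have hsub : ∀ x : Fin (M+1) → Option (Fin K),
        subst w x = Fin.append
          (fun i : Fin d => if (i : ℕ) < (t : ℕ) then some a
            else if (i : ℕ) < (t' : ℕ) then x 0 else some b)
          (subst wr (fun j => x j.succ)) := by
      intro x
      funext i
      rcases gr_finSplit i with ⟨i₀, rfl⟩ | ⟨i₀, rfl⟩
      · rw [Fin.append_left]
        show Sum.elim some x (w (Fin.castAdd n' i₀)) = _
        rw [hwL, hgval]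
        split_ifs <;> rfl
      · rw [Fin.append_right]
        show Sum.elim some x (w (Fin.natAdd d i₀)) = _
        rw [hwR]
        show _ = Sum.elim some (fun j => x j.succ) (wr i₀)
        cases h : wr i₀ <;> simp
    refine ⟨w, ⟨?_, ?_⟩, ?_⟩
    · intro j
      rcases Fin.eq_zero_or_eq_succ j with rfl | ⟨j₀, rfl⟩
      · refine ⟨Fin.castAdd n' ⟨(t : ℕ), htd⟩, ?_⟩
        rw [hwL, hgval]
        rw [if_neg (lt_irrefl _), if_pos htt]
      · obtain ⟨i₀, hi₀⟩ := hwr.1 j₀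
        refine ⟨Fin.natAdd d i₀, ?_⟩
        rw [hwR, hi₀]
        rfl
    · intro i i' j j' hlt hj hj'
      rcases gr_finSplit i with ⟨i₀, rfl⟩ | ⟨i₀, rfl⟩ <;>
        rcases gr_finSplit i' with ⟨i₁, rfl⟩ | ⟨i₁, rfl⟩
      · rw [hwL] at hj hj'
        rw [hginr i₀ j hj, hginr i₁ j' hj']
      · rw [hwL] at hj
        rw [hginr i₀ j hj]
        exact Fin.zero_le j'
      · exfalso
        have h1 : (Fin.natAdd d i₀ : Fin (d+n')) < Fin.castAdd n' i₁ := hlt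
        rw [Fin.lt_def] at h1
        simp only [Fin.coe_natAdd, Fin.coe_castAdd] at h1
        have := i₁.isLt
        omega
      · rw [hwR] at hj hj'
        obtain ⟨j₀, hj₀, rfl⟩ := hrinr i₀ j hj
        obtain ⟨j₁, hj₁, rfl⟩ := hrinr i₁ j' hj'
        have h1 : i₀ < i₁ := by
          have h2 : (Fin.natAdd d i₀ : Fin (d+n')) < Fin.natAdd d i₁ := hlt
          rw [Fin.lt_def] at h2
          simp only [Fin.coe_natAdd] at h2
          exact Fin.lt_def.mpr (by omega)
        exact Fin.succ_le_succ_iff.mpr (hwr.2 i₀ i₁ j₀ j₁ h1 hj₀ hj₁)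
    · intro x y hxy
      have mid := congrFun (hins (fun j => x j.succ) (fun j => y j.succ) (fun j => hxy j.succ))
        (fun i : Fin d => if (i : ℕ) < (t : ℕ) then some a
          else if (i : ℕ) < (t' : ℕ) then x 0 else some b)
      rw [hsub x, hsub y]
      refine mid.trans ?_
      rcases hxy 0 with h0 | ⟨hx0, hy0⟩
      · rw [h0]
      · have key : ∀ e : Option (Fin K), (e = some a ∨ e = some b) →
            c (Fin.append (fun i : Fin d => if (i : ℕ) < (t : ℕ) then some a
              else if (i : ℕ) < (t' : ℕ) then e else some b)
              (subst wr (fun j => y j.succ))) = tp t (fun j => y j.succ) := by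
          intro e he
          rcases he with rfl | rfl
          · have hF : (fun i : Fin d => if (i : ℕ) < (t : ℕ) then some a
                else if (i : ℕ) < (t' : ℕ) then some a else some b) = τ (t' : ℕ) := by
              funext i
              rw [hτval]
              split_ifs <;> first | rfl | omega
            rw [hF]
            exact (congrFun htp2 _).symm
          · have hF : (fun i : Fin d => if (i : ℕ) < (t : ℕ) then some a
                else if (i : ℕ) < (t' : ℕ) then some b else some b) = τ (t : ℕ) := by
              funext i
              rw [hτval]
              split_ifs <;> first | rfl | omega
            rw [hF]
        rw [key (x 0) hx0, key (y 0) hy0]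

lemma gr_step (k m r : ℕ) (hk : 0 < k)
    (IH : ∃ n₀ : ℕ, ∀ n, n₀ ≤ n → GRGood k m r n) :
    ∃ n₀ : ℕ, ∀ n, n₀ ≤ n → GRGood (k+1) m r n := by
  classical
  obtain ⟨M, hIH⟩ := IH
  set ea : Fin (k+1) := ⟨0, by omega⟩ with hea
  set eb : Fin (k+1) := Fin.last k with heb
  obtain ⟨n₁, hSh⟩ := gr_shelah (k+1) ea eb M (Fin r)
  refine ⟨n₁, fun n hn c => ?_⟩
  obtain ⟨w₀, hw₀, hins⟩ := hSh n hn c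
  set c' : VWord k M → Fin r :=
    (fun z => c (subst w₀ (fun J => (z J).map Fin.castSucc))) with hc'
  obtain ⟨u, hu, col, hcol⟩ := hIH M le_rfl c'
  set w : MWord (k+1) m n :=
    (fun i => Sum.elim Sum.inl (fun J => Sum.map Fin.castSucc id (u J)) (w₀ i)) with hwdef
  have hwi : ∀ i : Fin n, w i =
      Sum.elim Sum.inl (fun J => Sum.map Fin.castSucc id (u J)) (w₀ i) := fun _ => rfl
  have hwval : ∀ (i : Fin n) (j : Fin m), w i = Sum.inr j →
      ∃ J : Fin M, w₀ i = Sum.inr J ∧ u J = Sum.inr j := by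
    intro i j h
    rw [hwi i] at h
    cases hcase : w₀ i with
    | inl l => rw [hcase] at h; exact absurd h (by simp)
    | inr J =>
      rw [hcase] at h
      simp only [Sum.elim_inr] at h
      cases hu' : u J with
      | inl l => rw [hu'] at h; exact absurd h (by simp)
      | inr j' =>
        rw [hu'] at h
        simp only [Sum.map_inr, id_eq] at h
        refine ⟨J, rfl, ?_⟩
        rw [hu']
        exact congrArg Sum.inr (Sum.inr.inj h)
  refine ⟨w, ⟨?_, ?_⟩, col, ?_⟩
  · intro j
    obtain ⟨J, hJ⟩ := hu.1 j
    obtain ⟨i, hi⟩ := hw₀.1 J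
    refine ⟨i, ?_⟩
    rw [hwi i]
    simp only [hi, Sum.elim_inr, hJ, Sum.map_inr, id_eq]
  · intro i i' j j' hlt hj hj'
    obtain ⟨J, hJ, hj₀⟩ := hwval i j hj
    obtain ⟨J', hJ', hj₀'⟩ := hwval i' j' hj'
    have hJJ : J ≤ J' := hw₀.2 i i' J J' hlt hJ hJ'
    rcases eq_or_lt_of_le hJJ with rfl | hJJ'
    · rw [hj₀] at hj₀'
      exact le_of_eq (Sum.inr.inj hj₀')
    · exact hu.2 J J' j j' hJJ' hj₀ hj₀'
  · intro x hx
    set ρ : Option (Fin (k+1)) → Option (Fin (k+1)) :=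
      (fun e => if e = some eb then some ea else e) with hρ
    have hρe : ∀ e, ρ e = if e = some eb then some ea else e := fun _ => rfl
    set y : VWord (k+1) M :=
      (fun J => Sum.elim (fun l => some l) x (Sum.map Fin.castSucc id (u J))) with hy
    have hyJ0 : ∀ J, y J = Sum.elim (fun l => some l) x (Sum.map Fin.castSucc id (u J)) :=
      fun _ => rfl
    have h1 : subst w x = subst w₀ y := by
      funext i
      show Sum.elim some x (w i) = Sum.elim some y (w₀ i)
      rw [hwi i]
      cases hcase : w₀ i with
      | inl l => simp
      | inr J =>
        simp only [Sum.elim_inr]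
        rfl
    have hyJ : ∀ J, y J = Sum.elim (fun l => some (Fin.castSucc l)) x (u J) := by
      intro J
      rw [hyJ0]
      cases hu' : u J <;> rfl
    set z : VWord k m := (fun j => (x j).bind (fun l =>
      if hl : (l : ℕ) < k then some ⟨(l : ℕ), hl⟩ else some ⟨0, hk⟩)) with hz
    have hze : ∀ j, z j = (x j).bind (fun l =>
        if hl : (l : ℕ) < k then some ⟨(l : ℕ), hl⟩ else some ⟨0, hk⟩) := fun _ => rfl
    have hcs : ∀ (l : Fin k), (Fin.castSucc l : Fin (k+1)) ≠ eb := by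
      intro l hcon
      have h5 : ((Fin.castSucc l : Fin (k+1)) : ℕ) = k := by rw [hcon, heb]; rfl
      simp only [Fin.coe_castSucc] at h5
      have := l.isLt
      omega
    have hzmap : ∀ j, ρ (x j) = (z j).map Fin.castSucc := by
      intro j
      rw [hρe, hze]
      cases hxj : x j with
      | none => simp
      | some l =>
        by_cases hl : (l : ℕ) < k
        · have hne2 : (some l : Option (Fin (k+1))) ≠ some eb := by
            intro hcon
            have h5 := Option.some.inj hcon
            rw [heb] at h5
            have h6 : (l : ℕ) = k := by rw [h5]; rfl
            omega
          simp only [Option.bind_some, dif_pos hl, Option.map_some]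
          rw [if_neg hne2]
          exact congrArg some (Fin.ext (by simp))
        · have hlk : (l : ℕ) = k := by have := l.isLt; omega
          have hlb : l = eb := by rw [heb]; ext; simpa using hlk
          simp only [Option.bind_some, dif_neg hl, Option.map_some]
          rw [if_pos (by rw [hlb])]
          exact congrArg some (Fin.ext (by simp [hea]))
    have h2 : c (subst w₀ y) = c (subst w₀ (fun J => ρ (y J))) := by
      apply hins
      intro J
      show y J = ρ (y J) ∨ ((y J = some ea ∨ y J = some eb) ∧
        (ρ (y J) = some ea ∨ ρ (y J) = some eb))
      rw [hρe]
      by_cases hyb : y J = some eb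
      · exact Or.inr ⟨Or.inr hyb, Or.inl (by rw [if_pos hyb])⟩
      · exact Or.inl (by rw [if_neg hyb])
    have h3 : (fun J => ρ (y J)) = (fun J => ((subst u z) J).map Fin.castSucc) := by
      funext J
      rw [hyJ J]
      show ρ (Sum.elim (fun l => some (Fin.castSucc l)) x (u J))
        = (Sum.elim some z (u J)).map Fin.castSucc
      cases hu' : u J with
      | inl l =>
        simp only [Sum.elim_inl, Option.map_some]
        rw [hρe, if_neg]
        intro hcon
        exact hcs l (Option.some.inj hcon)
      | inr j =>
        simp only [Sum.elim_inr]
        exact hzmap j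
    have h4 : c (subst w₀ (fun J => ((subst u z) J).map Fin.castSucc)) = c' (subst u z) := rfl
    have hzvar : IsVarWord z := by
      obtain ⟨j, hj⟩ := hx
      exact ⟨j, by rw [hze, hj]; rfl⟩
    rw [h1, h2, h3, h4]
    exact hcol z hzvar

/-- The base case of the Graham–Rothschild theorem. -/
theorem stmt_12 (k r m : ℕ) (hk : 0 < k) (hr : 0 < r) (hm : 0 < m) :
    ∃ n₀ : ℕ, 0 < n₀ ∧ ∀ n, n₀ ≤ n → ∀ c : VWord k n → Fin r,
      ∃ w : MWord k m n, IsMVarWord w ∧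
        ∃ col, ∀ x : VWord k m, IsVarWord x → c (subst w x) = col := by
  have main : ∀ k', 1 ≤ k' → ∃ n₀ : ℕ, ∀ n, n₀ ≤ n → GRGood k' m r n := by
    intro k' hk1
    induction k', hk1 using Nat.le_induction with
    | base => exact gr_one m r
    | succ k' hk' IH => exact gr_step k' m r (by omega) IH
  obtain ⟨n₀, h⟩ := main k hk
  exact ⟨n₀ + 1, Nat.succ_pos _, fun n hn c => h n (by omega) c⟩
end
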